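/- Let ℓ be an odd prime, and let ⟨·,·⟩ : (F_ℓ)² × (F_ℓ)² → F_ℓ be a non-degenerate alternating bilinear form. Let M ∈ GL₂(F_ℓ) be a matrix that is not diagonalizable over F_ℓ and has a repeated eigenvalue in F_ℓ (i.e., M is conjugate to a matrix [[a,1],[0,a]] for some a ∈ F_ℓˣ). Then for any two vectors v, w ∈ (F_ℓ)² with ⟨v, Mv⟩ ≠ 0 and ⟨w, Mw⟩ ≠ 0, the quotient ⟨v, Mv⟩ / ⟨w, Mw⟩ is a square in F_ℓˣ. -/
import Mathlib


theorem stmt_0 (ℓ : ℕ) [Fact ℓ.Prime] (hodd : Odd ℓ)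
    (B : LinearMap.BilinForm (ZMod ℓ) (Fin 2 → ZMod ℓ))
    (halt : B.IsAlt) (hnd : B.Nondegenerate)
    (M : Matrix (Fin 2) (Fin 2) (ZMod ℓ)) (hM : IsUnit M)
    (a : (ZMod ℓ)ˣ)
    (hconj : ∃ P : (Matrix (Fin 2) (Fin 2) (ZMod ℓ))ˣ,
      M = (P : Matrix (Fin 2) (Fin 2) (ZMod ℓ)) * !![(a : ZMod ℓ), 1; 0, (a : ZMod ℓ)] * (↑P⁻¹ : Matrix (Fin 2) (Fin 2) (ZMod ℓ)))
    (hMdiag : ¬ ∃ Q : (Matrix (Fin 2) (Fin 2) (ZMod ℓ))ˣ, ∃ d₁ d₂ : ZMod ℓ,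
      M = (Q : Matrix (Fin 2) (Fin 2) (ZMod ℓ)) * Matrix.diagonal ![d₁, d₂] * (↑Q⁻¹ : Matrix (Fin 2) (Fin 2) (ZMod ℓ)))
    (v w : Fin 2 → ZMod ℓ)
    (hv : B v (M.mulVec v) ≠ 0) (hw : B w (M.mulVec w) ≠ 0) :
    ∃ t : (ZMod ℓ)ˣ, B v (M.mulVec v) = (t : ZMod ℓ) ^ 2 * B w (M.mulVec w) := by
  obtain ⟨P, hP⟩ := hconj
  set e0 : Fin 2 → ZMod ℓ := ![1, 0] with he0
  set e1 : Fin 2 → ZMod ℓ := ![0, 1] with he1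
  set b := B e0 e1 with hb
  have hdecomp : ∀ u : Fin 2 → ZMod ℓ, u = u 0 • e0 + u 1 • e1 := by
    intro u; funext i; fin_cases i <;> simp [he0, he1]
  have hBform : ∀ u z : Fin 2 → ZMod ℓ, B u z = (u 0 * z 1 - u 1 * z 0) * b := by
    intro u z
    conv_lhs => rw [hdecomp u, hdecomp z]
    simp only [map_add, map_smul, LinearMap.add_apply, LinearMap.smul_apply, smul_eq_mul]
    rw [halt e0, halt e1, ← LinearMap.IsAlt.neg halt e0 e1, ← hb]
    ring
  -- matrix helpers
  have hPinvP : ∀ u : Fin 2 → ZMod ℓ,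
      (↑P⁻¹ : Matrix (Fin 2) (Fin 2) (ZMod ℓ)).mulVec ((↑P : Matrix (Fin 2) (Fin 2) (ZMod ℓ)).mulVec u) = u := by
    intro u; rw [Matrix.mulVec_mulVec, Units.inv_mul, Matrix.one_mulVec]
  have hPPinv : ∀ u : Fin 2 → ZMod ℓ,
      (↑P : Matrix (Fin 2) (Fin 2) (ZMod ℓ)).mulVec ((↑P⁻¹ : Matrix (Fin 2) (Fin 2) (ZMod ℓ)).mulVec u) = u := by
    intro u; rw [Matrix.mulVec_mulVec, Units.mul_inv, Matrix.one_mulVec]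
  set f : (Fin 2 → ZMod ℓ) → ZMod ℓ := fun u => (↑P⁻¹ : Matrix (Fin 2) (Fin 2) (ZMod ℓ)).mulVec u 1 with hf
  set x := (↑P : Matrix (Fin 2) (Fin 2) (ZMod ℓ)).mulVec e0 with hx
  set y := (↑P : Matrix (Fin 2) (Fin 2) (ZMod ℓ)).mulVec e1 with hy
  have hMv : ∀ u : Fin 2 → ZMod ℓ, M.mulVec u = (a : ZMod ℓ) • u + f u • x := by
    intro u
    rw [hP, ← Matrix.mulVec_mulVec, ← Matrix.mulVec_mulVec]
    have hJ : ∀ z : Fin 2 → ZMod ℓ,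
        (!![(a : ZMod ℓ), 1; 0, (a : ZMod ℓ)]).mulVec z = (a : ZMod ℓ) • z + z 1 • e0 := by
      intro z; funext i; fin_cases i <;>
        simp [Matrix.mulVec, dotProduct, Fin.sum_univ_two, he0] <;> ring
    rw [hJ, Matrix.mulVec_add, Matrix.mulVec_smul, Matrix.mulVec_smul, hPPinv]
  have hvdecomp : ∀ u : Fin 2 → ZMod ℓ,
      u = ((↑P⁻¹ : Matrix (Fin 2) (Fin 2) (ZMod ℓ)).mulVec u 0) • x + f u • y := by
    intro u
    conv_lhs => rw [← hPPinv u, hdecomp ((↑P⁻¹ : Matrix (Fin 2) (Fin 2) (ZMod ℓ)).mulVec u)]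
    rw [Matrix.mulVec_add, Matrix.mulVec_smul, Matrix.mulVec_smul]
  have key : ∀ u : Fin 2 → ZMod ℓ,
      B u (M.mulVec u) = (b * (y 0 * x 1 - y 1 * x 0)) * (f u) ^ 2 := by
    intro u
    have h0 := congrFun (hvdecomp u) 0
    have h1 := congrFun (hvdecomp u) 1
    simp only [Pi.add_apply, Pi.smul_apply, smul_eq_mul] at h0 h1
    rw [hBform, hMv u]
    simp only [Pi.add_apply, Pi.smul_apply, smul_eq_mul]
    rw [h0, h1]
    ring
  have hv' := hv; rw [key v] at hv'
  have hw' := hw; rw [key w] at hw'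
  have hfv : f v ≠ 0 := fun h => hv' (by rw [h]; ring)
  have hfw : f w ≠ 0 := fun h => hw' (by rw [h]; ring)
  refine ⟨Units.mk0 (f v) hfv * (Units.mk0 (f w) hfw)⁻¹, ?_⟩
  rw [key v, key w]
  simp only [Units.val_mul, Units.val_inv_eq_inv_val, Units.val_mk0]
  field_simp
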